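/- arXiv:2307.02255 — 2 statements merged into one kernel-verified Lean document; each statement's English description precedes it below -/
import Mathlib

section
/- There is a positive numerical constant c such that the following holds: for every nondecreasing, nonnegative, convex function φ : ℝ → ℝ, every x > 0 with φ(x) > 0, and every positive integer n, P(S_n^* ≥ 4x) ≤ E(φ(S_n))/φ(x) + c·(n/x^4)·( 1 + Σ_{k≥1} k·(k ∧ x)·θ̄(k) ), where θ̄(k) = θ_{X,1,1}(k). -/
open MeasureTheory ProbabilityTheory Filter Set Asymptotics
open scoped ENNReal NNReal Topology MeasureTheory

noncomputable section

/-- The σ-algebra σ(X_i : i ≤ j) generated by the process up to time `j`. -/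
def natFiltration {Ω : Type*} [MeasurableSpace Ω] (X : ℤ → Ω → ℝ) (j : ℤ) :
    MeasurableSpace Ω :=
  ⨆ i ∈ Set.Iic j, MeasurableSpace.comap (X i) Real.measurableSpace

/-- Strict stationarity of a real-valued process indexed by ℤ. -/
def IsStrictlyStationary {Ω : Type*} [MeasurableSpace Ω] (μ : Measure Ω)
    (X : ℤ → Ω → ℝ) : Prop :=
  ∀ (n : ℕ) (t : Fin n → ℤ) (s : ℤ),
    μ.map (fun ω => fun i => X (t i + s) ω) = μ.map (fun ω => fun i => X (t i) ω)

/-- The dependence coefficient θ_{Y,p,q}(k), with conditioning σ-algebra `m`. -/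
def thetaCoef {Ω : Type*} [MeasurableSpace Ω] (μ : Measure Ω) (m : MeasurableSpace Ω)
    (Y : ℤ → Ω → ℝ) (p q k : ℕ) : ℝ :=
  ⨆ ka : {ka : (Fin p → ℤ) × (Fin p → ℕ) //
      StrictMono ka.1 ∧ (∀ i, (k : ℤ) ≤ ka.1 i) ∧
      (∀ i : Fin p, (i : ℕ) = 0 → 1 ≤ ka.2 i) ∧ (∑ i, ka.2 i) ≤ q},
    ∫ ω, |(μ[(fun ω' => ∏ i, (Y (ka.1.1 i) ω') ^ (ka.1.2 i)) | m]) ω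
        - ∫ ω', ∏ i, (Y (ka.1.1 i) ω') ^ (ka.1.2 i) ∂μ| ∂μ

/-- θ(k) = θ_{X,4,4}(k). -/
def theta {Ω : Type*} [MeasurableSpace Ω] (μ : Measure Ω) (X : ℤ → Ω → ℝ) (k : ℕ) : ℝ :=
  thetaCoef μ (natFiltration X 0) X 4 4 k

/-- Partial sums S_n = X_1 + ... + X_n. -/
def pSum {Ω : Type*} (X : ℤ → Ω → ℝ) (n : ℕ) (ω : Ω) : ℝ :=
  ∑ i ∈ Finset.range n, X (i + 1 : ℤ) ω

/-- S_n^* = max_{0 ≤ k ≤ n} S_k. -/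
def pSumMax {Ω : Type*} (X : ℤ → Ω → ℝ) (n : ℕ) (ω : Ω) : ℝ :=
  ⨆ k ∈ Finset.range (n + 1), pSum X k ω

/-- The coefficient θ̄(k) = θ_{X,1,1}(k) = sup_{j ≥ k} ‖E(X_j | F_0)‖₁. -/
def thetabar {Ω : Type*} [MeasurableSpace Ω] (μ : Measure Ω) (X : ℤ → Ω → ℝ) (k : ℕ) : ℝ :=
  ⨆ j : {j : ℤ // (k : ℤ) ≤ j}, ∫ ω, |(μ[X (j : ℤ)|natFiltration X 0]) ω| ∂μ

/-!
Let `ℱ_k = σ(X_1, …, X_{k+1})` and `L = ⌊x/2⌋`. The process `f_k = E(S_{k+L} | ℱ_k)` stays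
within `L` of `S_k`, and its predictable increments `E(f_{k+1} - f_k | ℱ_k) = E(X_{k+L+1} | ℱ_k)`
have `L¹` norm at most `θ̄(L)`: shifting time by `k + 1` moves `ℱ_k` into the past `F_0` and
`X_{k+L+1}` to `X_L`. Write `f = N + A` for the Doob decomposition. On `{S_n^* ≥ 4x}` either
the total variation `Q` of `A` is at least `x`, which Markov's inequality controls by
`E Q / x ≤ n θ̄(L) / x`, or `max_k (N_k - b - L)⁺ ≥ 3x - 2L - b`, which Doob's maximal inequality
for the submartingale `(N - b - L)⁺` controls. This gives, for every `b < x`,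
`P(S_n^* ≥ 4x) ≤ E(S_n - b)⁺ / (x - b) + 2 n θ̄(L) / x`.
If `a > 0` is the slope of a tangent of `φ` at `x` and `b` is the zero of that tangent, then
`a (t - b)⁺ ≤ φ(t)` bounds the first term by `E φ(S_n) / φ(x)`; since `θ̄` is nonincreasing,
`θ̄(L) x³ ≲ ∑_{k ≤ L} k² θ̄(k)` bounds the second. If the tangent is flat, `E φ(S_n) ≥ φ(x)`, and
if `x⁴ ≲ n` the right-hand side exceeds `1`.
-/

open Finset

namespace MeasureTheory

section CondExp

variable {Ω : Type*} {m0 : MeasurableSpace Ω} {μ : Measure Ω} [IsFiniteMeasure μ]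

lemma integral_abs_condExp_le_of_le {m₁ m₂ : MeasurableSpace Ω} (h₁₂ : m₁ ≤ m₂) (h₂ : m₂ ≤ m0)
    (f : Ω → ℝ) : ∫ ω, |μ[f | m₁] ω| ∂μ ≤ ∫ ω, |μ[f | m₂] ω| ∂μ :=
  calc ∫ ω, |μ[f | m₁] ω| ∂μ = ∫ ω, |μ[μ[f | m₂] | m₁] ω| ∂μ := by
        refine integral_congr_ae ?_
        filter_upwards [condExp_condExp_of_le (μ := μ) (f := f) h₁₂ h₂] with ω hω
        rw [hω]
    _ ≤ ∫ ω, |μ[f | m₂] ω| ∂μ := integral_abs_condExp_le _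

lemma ae_abs_condExp_sub_le {m : MeasurableSpace Ω} (hm : m ≤ m0) {g h : Ω → ℝ}
    (hg : Integrable g μ) (hh : StronglyMeasurable[m] h) (hhint : Integrable h μ) {R : ℝ}
    (hgh : ∀ᵐ ω ∂μ, |g ω - h ω| ≤ R) : ∀ᵐ ω ∂μ, |μ[g | m] ω - h ω| ≤ R := by
  have hsub : μ[g - h | m] =ᵐ[μ] μ[g | m] - h := by
    simpa only [condExp_of_stronglyMeasurable hm hh hhint] using condExp_sub hg hhint m
  filter_upwards [hsub, ae_bdd_abs_condExp_of_ae_bdd_abs (m := m) (f := g - h) hgh]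
    with ω h₁ h₂
  rwa [h₁] at h₂

variable {β γ : Type*} [MeasurableSpace β] [mγ : MeasurableSpace γ]

lemma condExp_comp_ae_eq {W : Ω → β} (hW : Measurable W) {g : β → γ} (hg : Measurable g)
    {f : β → ℝ} (hf : Integrable f (μ.map W)) :
    μ[f ∘ W | mγ.comap (g ∘ W)] =ᵐ[μ] (μ.map W)[f | mγ.comap g] ∘ W := by
  have hm : mγ.comap g ≤ ‹MeasurableSpace β› := hg.comap_le
  have hc : StronglyMeasurable[mγ.comap g] ((μ.map W)[f | mγ.comap g]) :=
    stronglyMeasurable_condExp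
  have hcW : Integrable ((μ.map W)[f | mγ.comap g] ∘ W) μ :=
    (integrable_map_measure (hc.mono hm).aestronglyMeasurable hW.aemeasurable).mp
      integrable_condExp
  refine (ae_eq_condExp_of_forall_setIntegral_eq (hg.comp hW).comap_le
    ((integrable_map_measure hf.aestronglyMeasurable hW.aemeasurable).mp hf)
    (fun s _ _ => hcW.integrableOn) ?_ ?_).symm
  · rintro _ ⟨B, hB, rfl⟩ -
    simp only [Set.preimage_comp, Function.comp_apply]
    rw [← setIntegral_map (hg hB) (hc.mono hm).aestronglyMeasurable hW.aemeasurable,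
      ← setIntegral_map (hg hB) hf.aestronglyMeasurable hW.aemeasurable]
    exact setIntegral_condExp hm hf ⟨B, hB, rfl⟩
  · refine (hc.comp_measurable ?_).aestronglyMeasurable
    rw [measurable_iff_comap_le, MeasurableSpace.comap_comp]

lemma integral_abs_condExp_comp_eq_of_map_eq {W W' : Ω → β} (hW : Measurable W)
    (hW' : Measurable W') (hlaw : μ.map W = μ.map W') {g : β → γ} (hg : Measurable g)
    {f : β → ℝ} (hf : Integrable f (μ.map W)) :
    ∫ ω, |μ[f ∘ W | mγ.comap (g ∘ W)] ω| ∂μ = ∫ ω, |μ[f ∘ W' | mγ.comap (g ∘ W')] ω| ∂μ := by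
  have hpush : ∀ {V : Ω → β}, Measurable V → Integrable f (μ.map V) →
      ∫ ω, |μ[f ∘ V | mγ.comap (g ∘ V)] ω| ∂μ
        = ∫ v, |(μ.map V)[f | mγ.comap g] v| ∂(μ.map V) := by
    intro V hV hfV
    rw [integral_map hV.aemeasurable (continuous_abs.comp_aestronglyMeasurable
      (stronglyMeasurable_condExp.mono hg.comap_le).aestronglyMeasurable)]
    refine integral_congr_ae ?_
    filter_upwards [condExp_comp_ae_eq hV hg hfV] with ω hω
    rw [hω, Function.comp_apply]
  rw [hpush hW hf, hpush hW' (hlaw ▸ hf), hlaw]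

end CondExp

section DoobDecomposition

variable {Ω : Type*} {m0 : MeasurableSpace Ω} {μ : Measure Ω} {ℱ : Filtration ℕ m0}

lemma condExp_sub_condExp_succ_ae_eq [IsFiniteMeasure μ] {Z : ℕ → Ω → ℝ}
    (hZ : ∀ k, Integrable (Z k) μ) (k : ℕ) :
    μ[μ[Z (k + 1) | ℱ (k + 1)] - μ[Z k | ℱ k] | ℱ k] =ᵐ[μ] μ[Z (k + 1) - Z k | ℱ k] := by
  filter_upwards [condExp_sub (m := ℱ k) (integrable_condExp (f := Z (k + 1)))
      (integrable_condExp (f := Z k)),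
    condExp_condExp_of_le (μ := μ) (f := Z (k + 1)) (ℱ.mono k.le_succ) (ℱ.le _),
    condExp_sub (m := ℱ k) (hZ (k + 1)) (hZ k)] with ω h₁ h₂ h₃
  rw [h₁, h₃, Pi.sub_apply, Pi.sub_apply, h₂,
    condExp_of_stronglyMeasurable (ℱ.le k) stronglyMeasurable_condExp integrable_condExp]

lemma Martingale.measureReal_le_sup'_posPart [IsFiniteMeasure μ] {N : ℕ → Ω → ℝ}
    (hN : Martingale N ℱ μ) (β : ℝ) {t : ℝ} (ht : 0 < t) (n : ℕ) :
    μ.real {ω | t ≤ (range (n + 1)).sup' nonempty_range_add_one fun k => max (N k ω - β) 0}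
      ≤ (∫ ω, max (N n ω - β) 0 ∂μ) / t := by
  have hsub : Submartingale (N - fun _ _ => β)⁺ ℱ μ :=
    (hN.sub (martingale_const ℱ μ β)).submartingale.pos
  have hdoob := ENNReal.toReal_mono ENNReal.ofReal_ne_top
    (maximal_ineq hsub (fun k ω => posPart_nonneg _) (ε := t.toNNReal) n)
  simp only [ENNReal.toReal_mul, ENNReal.toReal_ofReal', ENNReal.coe_toReal,
    Real.coe_toNNReal _ ht.le] at hdoob
  have hint : Integrable (fun ω => max (N n ω - β) 0) μ :=
    ((hN.integrable n).sub (integrable_const β)).pos_part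
  rw [le_div_iff₀ ht, mul_comm]
  exact hdoob.trans (max_le
    (setIntegral_le_integral hint (Eventually.of_forall fun _ => le_max_right _ _))
    (integral_nonneg fun _ => le_max_right _ _))

def predictableVariation (f : ℕ → Ω → ℝ) (ℱ : Filtration ℕ m0) (μ : Measure Ω) (n : ℕ)
    (ω : Ω) : ℝ :=
  ∑ i ∈ range n, |μ[f (i + 1) - f i | ℱ i] ω|

lemma predictableVariation_nonneg (f : ℕ → Ω → ℝ) (n : ℕ) (ω : Ω) :
    0 ≤ predictableVariation f ℱ μ n ω :=
  sum_nonneg fun _ _ => abs_nonneg _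

lemma integrable_predictableVariation (f : ℕ → Ω → ℝ) (n : ℕ) :
    Integrable (predictableVariation f ℱ μ n) μ :=
  integrable_finsetSum _ fun _ _ => integrable_condExp.abs

lemma integral_predictableVariation (f : ℕ → Ω → ℝ) (n : ℕ) :
    ∫ ω, predictableVariation f ℱ μ n ω ∂μ
      = ∑ i ∈ range n, ∫ ω, |μ[f (i + 1) - f i | ℱ i] ω| ∂μ :=
  integral_finsetSum _ fun _ _ => integrable_condExp.abs

lemma abs_martingalePart_sub_le {f : ℕ → Ω → ℝ} {k n : ℕ} (hkn : k ≤ n) (ω : Ω) :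
    |martingalePart f ℱ μ k ω - f k ω| ≤ predictableVariation f ℱ μ n ω := by
  have hA : martingalePart f ℱ μ k ω - f k ω = -∑ i ∈ range k, μ[f (i + 1) - f i | ℱ i] ω := by
    simp [martingalePart, predictablePart, Finset.sum_apply]
  rw [hA, abs_neg]
  exact (abs_sum_le_sum_abs _ _).trans <| sum_le_sum_of_subset_of_nonneg
    (range_subset_range.mpr hkn) fun _ _ _ => abs_nonneg _

lemma integral_max_martingalePart_sub_le [IsFiniteMeasure μ] {f S : ℕ → Ω → ℝ}
    (hfint : ∀ k, Integrable (f k) μ) {n : ℕ} {ℓ : ℝ} (hfS : ∀ᵐ ω ∂μ, |f n ω - S n ω| ≤ ℓ)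
    (hSint : Integrable (S n) μ) (b : ℝ) {D : ℝ}
    (hD : ∫ ω, predictableVariation f ℱ μ n ω ∂μ ≤ D) :
    ∫ ω, max (martingalePart f ℱ μ n ω - (b + ℓ)) 0 ∂μ ≤ ∫ ω, max (S n ω - b) 0 ∂μ + D := by
  have hSb : Integrable (fun ω => max (S n ω - b) 0) μ := (hSint.sub (integrable_const b)).pos_part
  calc _ ≤ ∫ ω, (max (S n ω - b) 0 + predictableVariation f ℱ μ n ω) ∂μ := by
        refine integral_mono_ae ((integrable_martingalePart hfint n).sub
          (integrable_const _)).pos_part (hSb.add (integrable_predictableVariation f n)) ?_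
        filter_upwards [hfS] with ω hω
        have h₁ := abs_le.mp hω
        have h₂ := abs_le.mp (abs_martingalePart_sub_le (μ := μ) (ℱ := ℱ) (f := f) (le_refl n) ω)
        exact max_le (by linarith [le_max_left (S n ω - b) 0])
          (add_nonneg (le_max_right _ _) (predictableVariation_nonneg f n ω))
    _ = ∫ ω, max (S n ω - b) 0 ∂μ + ∫ ω, predictableVariation f ℱ μ n ω ∂μ :=
        integral_add hSb (integrable_predictableVariation f n)
    _ ≤ _ := add_le_add le_rfl hD

theorem measureReal_le_sup'_of_abs_sub_le [IsFiniteMeasure μ] {f S : ℕ → Ω → ℝ}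
    (hf : StronglyAdapted ℱ f) (hfint : ∀ k, Integrable (f k) μ) {n : ℕ} {ℓ : ℝ}
    (hfS : ∀ k ≤ n, ∀ᵐ ω ∂μ, |f k ω - S k ω| ≤ ℓ) (hSint : Integrable (S n) μ)
    {b t u D : ℝ} (ht : 0 < t) (hu : 0 < u) (hD : ∫ ω, predictableVariation f ℱ μ n ω ∂μ ≤ D) :
    μ.real {ω | b + 2 * ℓ + t + u ≤ (range (n + 1)).sup' nonempty_range_add_one fun k => S k ω}
      ≤ (∫ ω, max (S n ω - b) 0 ∂μ + D) / t + D / u := by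
  set N := martingalePart f ℱ μ
  set Q := predictableVariation f ℱ μ n
  have hNf : ∀ k ≤ n, ∀ ω, |N k ω - f k ω| ≤ Q ω := fun _ hk ω => abs_martingalePart_sub_le hk ω
  have hevent : {ω | b + 2 * ℓ + t + u ≤ (range (n + 1)).sup' nonempty_range_add_one
        fun k => S k ω} ≤ᵐ[μ] ({ω | u ≤ Q ω} ∪ {ω | t ≤ (range (n + 1)).sup'
          nonempty_range_add_one fun k => max (N k ω - (b + ℓ)) 0} : Set Ω) := by
    filter_upwards [(eventually_all_finite (Set.finite_Iic n)).2 hfS] with ω hω hmem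
    obtain ⟨k, hk, hSk⟩ := le_sup'_iff _ |>.mp hmem
    have hkn : k ≤ n := Nat.lt_succ_iff.mp (mem_range.mp hk)
    refine (le_or_gt u (Q ω)).imp id fun hQu => show t ≤ _ from le_sup'_of_le _ hk ?_
    have h₁ := abs_le.mp (hω k hkn)
    have h₂ := abs_le.mp (hNf k hkn ω)
    linarith [le_max_left (N k ω - (b + ℓ)) 0]
  have hmarkov : μ.real {ω | u ≤ Q ω} ≤ D / u := by
    rw [le_div_iff₀ hu, mul_comm]
    exact (mul_meas_ge_le_integral_of_nonneg (Eventually.of_forall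
      (predictableVariation_nonneg f n)) (integrable_predictableVariation f n) u).trans hD
  calc _ ≤ μ.real ({ω | u ≤ Q ω} ∪ {ω | t ≤ (range (n + 1)).sup' nonempty_range_add_one
          fun k => max (N k ω - (b + ℓ)) 0} : Set Ω) :=
        ENNReal.toReal_mono (measure_ne_top _ _) (measure_mono_ae hevent)
    _ ≤ D / u + (∫ ω, max (S n ω - b) 0 ∂μ + D) / t :=
        (measureReal_union_le _ _).trans <| add_le_add hmarkov <|
          ((martingale_martingalePart hf hfint).measureReal_le_sup'_posPart (b + ℓ) ht n).trans
            (div_le_div_of_nonneg_right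
              (integral_max_martingalePart_sub_le hfint (hfS n le_rfl) hSint b hD) ht.le)
    _ = _ := add_comm _ _

end DoobDecomposition

end MeasureTheory

lemma ConvexOn.add_derivWithin_Ioi_mul_sub_le {φ : ℝ → ℝ} (hφ : ConvexOn ℝ Set.univ φ)
    (x y : ℝ) : φ x + derivWithin φ (Set.Ioi x) x * (y - x) ≤ φ y := by
  have hx : x ∈ interior (Set.univ : Set ℝ) := by simp
  rcases lt_trichotomy y x with hyx | rfl | hxy
  · have h := (hφ.slope_le_leftDeriv_of_mem_interior (Set.mem_univ y) hx hyx).trans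
      (hφ.leftDeriv_le_rightDeriv_of_mem_interior hx)
    rw [slope_def_field, div_le_iff₀ (sub_pos.2 hyx)] at h
    linarith
  · simp
  · have h := hφ.rightDeriv_le_slope_of_mem_interior hx (Set.mem_univ y) hxy
    rw [slope_def_field, le_div_iff₀ (sub_pos.2 hxy)] at h
    linarith

lemma integral_max_sub_div_le_of_tangent {Ω : Type*} [MeasurableSpace Ω] {μ : Measure Ω}
    [IsFiniteMeasure μ] {Y : Ω → ℝ} (hY : Integrable Y μ) {φ : ℝ → ℝ} (hφY : Integrable (fun ω => φ (Y ω)) μ)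
    (hφ0 : ∀ t, 0 ≤ φ t) {x a : ℝ} (ha : 0 < a) (hφx : 0 < φ x)
    (htangent : ∀ y, φ x + a * (y - x) ≤ φ y) :
    (∫ ω, max (Y ω - (x - φ x / a)) 0 ∂μ) / (x - (x - φ x / a)) ≤ (∫ ω, φ (Y ω) ∂μ) / φ x := by
  rw [sub_sub_cancel, div_div_eq_mul_div, div_le_div_iff_of_pos_right hφx, ← integral_mul_const]
  refine integral_mono ((hY.sub (integrable_const _)).pos_part.mul_const _) hφY fun ω => ?_
  rw [max_mul_of_nonneg _ _ ha.le, zero_mul]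
  refine max_le ?_ (hφ0 _)
  calc (Y ω - (x - φ x / a)) * a = φ x + a * (Y ω - x) := by field_simp; ring
    _ ≤ _ := htangent _

lemma pow_three_le_three_mul_sum_sq (L : ℕ) :
    (L : ℝ) ^ 3 ≤ 3 * ∑ k ∈ Finset.Icc 1 L, (k : ℝ) ^ 2 := by
  induction L with
  | zero => simp
  | succ L ih =>
    rw [sum_Icc_succ_top (by omega), Nat.cast_succ]
    nlinarith [(L.cast_nonneg : (0 : ℝ) ≤ L)]

lemma ENNReal.ofReal_one_add_sum_le_tsum {f : ℕ → ℝ} (hf : ∀ k, 0 ≤ f k) (s : Finset ℕ) :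
    ENNReal.ofReal (1 + ∑ k ∈ s, f k) ≤ 1 + ∑' k, ENNReal.ofReal (f k) := by
  rw [ENNReal.ofReal_add zero_le_one (sum_nonneg fun k _ => hf k), ENNReal.ofReal_one,
    ENNReal.ofReal_sum_of_nonneg fun k _ => hf k]
  exact add_le_add le_rfl (ENNReal.sum_le_tsum s)

section PartialSums

variable {Ω : Type*}

lemma pSumMax_eq_sup' (X : ℤ → Ω → ℝ) (n : ℕ) (ω : Ω) :
    pSumMax X n ω = (range (n + 1)).sup' nonempty_range_add_one fun k => pSum X k ω := by
  have hle : ∀ k, ⨆ _ : k ∈ range (n + 1), pSum X k ω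
      ≤ (range (n + 1)).sup' nonempty_range_add_one fun k => pSum X k ω := by
    intro k
    by_cases hk : k ∈ range (n + 1)
    · rw [ciSup_pos hk]
      exact le_sup' (fun k => pSum X k ω) hk
    · rw [ciSup_neg hk, Real.sSup_empty]
      exact le_sup'_of_le (fun k => pSum X k ω) (mem_range.mpr n.succ_pos) (by simp [pSum])
  refine le_antisymm (ciSup_le hle) (sup'_le _ _ fun k hk => ?_)
  refine le_ciSup_of_le ⟨_, Set.forall_mem_range.mpr hle⟩ k ?_
  rw [ciSup_pos hk]

lemma pSum_succ_sub (X : ℤ → Ω → ℝ) (m : ℕ) : pSum X (m + 1) - pSum X m = X ((m : ℤ) + 1) := by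
  funext ω
  simp [pSum, sum_range_succ]

end PartialSums

section Stationary

variable {Ω : Type*} [m0 : MeasurableSpace Ω] {μ : Measure Ω} {X : ℤ → Ω → ℝ}

structure IsBoundedStationary (μ : Measure Ω) (X : ℤ → Ω → ℝ) : Prop where
  measurable : ∀ i, Measurable (X i)
  stationary : IsStrictlyStationary μ X
  ae_abs_le_one : ∀ᵐ ω ∂μ, |X 0 ω| ≤ 1

namespace IsBoundedStationary

lemma map_eq (hX : IsBoundedStationary μ X) (i : ℤ) : μ.map (X i) = μ.map (X 0) := by
  have hpt : ∀ j, X j = (fun v : Fin 1 → ℝ => v 0) ∘ fun ω _ => X j ω := fun _ => rfl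
  rw [hpt i, hpt 0, ← Measure.map_map (measurable_pi_apply 0)
      (measurable_pi_lambda _ fun _ => hX.measurable i),
    ← Measure.map_map (measurable_pi_apply 0) (measurable_pi_lambda _ fun _ => hX.measurable 0)]
  simpa using congrArg (Measure.map fun v : Fin 1 → ℝ => v 0) (hX.stationary 1 (fun _ => 0) i)

lemma ae_abs_le (hX : IsBoundedStationary μ X) (i : ℤ) : ∀ᵐ ω ∂μ, |X i ω| ≤ 1 := by
  have hs : MeasurableSet {y : ℝ | |y| ≤ 1} := measurableSet_le measurable_abs measurable_const
  rw [← ae_map_iff (hX.measurable i).aemeasurable hs, hX.map_eq,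
    ae_map_iff (hX.measurable 0).aemeasurable hs]
  exact hX.ae_abs_le_one

lemma integrable [IsFiniteMeasure μ] (hX : IsBoundedStationary μ X) (i : ℤ) :
    Integrable (X i) μ :=
  (integrable_const 1).mono' (hX.measurable i).aestronglyMeasurable (hX.ae_abs_le i)

lemma integrable_pSum [IsFiniteMeasure μ] (hX : IsBoundedStationary μ X) (k : ℕ) :
    Integrable (pSum X k) μ :=
  integrable_finsetSum _ fun _ _ => hX.integrable _

lemma ae_abs_pSum_add_sub_le (hX : IsBoundedStationary μ X) (k L : ℕ) :
    ∀ᵐ ω ∂μ, |pSum X (k + L) ω - pSum X k ω| ≤ L := by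
  filter_upwards [ae_all_iff.2 hX.ae_abs_le] with ω hω
  rw [pSum, pSum, sum_range_add, add_sub_cancel_left]
  calc _ ≤ ∑ i ∈ range L, |X (((k + i : ℕ) : ℤ) + 1) ω| := abs_sum_le_sum_abs _ _
    _ ≤ ∑ _i ∈ range L, (1 : ℝ) := sum_le_sum fun i _ => hω _
    _ = L := by simp

lemma integrable_comp_pSum [IsFiniteMeasure μ] (hX : IsBoundedStationary μ X) {φ : ℝ → ℝ}
    (hφ : Monotone φ) (n : ℕ) : Integrable (fun ω => φ (pSum X n ω)) μ := by
  refine (integrable_const (max |φ (-n)| |φ n|)).mono'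
    (hφ.measurable.comp (measurable_sum _ fun _ _ => hX.measurable _)).aestronglyMeasurable ?_
  filter_upwards [hX.ae_abs_pSum_add_sub_le 0 n] with ω hω
  rw [zero_add, show pSum X 0 ω = 0 by simp [pSum], sub_zero, abs_le] at hω
  exact abs_le_max_abs_abs (hφ hω.1) (hφ hω.2)

lemma le_thetabar [IsProbabilityMeasure μ] (hX : IsBoundedStationary μ X) {k : ℕ} {j : ℤ}
    (hj : (k : ℤ) ≤ j) : ∫ ω, |μ[X j | natFiltration X 0] ω| ∂μ ≤ thetabar μ X k := by
  refine le_ciSup (f := fun j : {j : ℤ // (k : ℤ) ≤ j} =>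
    ∫ ω, |μ[X j | natFiltration X 0] ω| ∂μ) ⟨1, ?_⟩ ⟨j, hj⟩
  rintro _ ⟨i, rfl⟩
  calc _ ≤ ∫ ω, |X i ω| ∂μ := integral_abs_condExp_le _
    _ ≤ ∫ _, (1 : ℝ) ∂μ :=
        integral_mono_ae (hX.integrable i).abs (integrable_const 1) (hX.ae_abs_le i)
    _ = 1 := by simp

lemma thetabar_nonneg [IsProbabilityMeasure μ] (hX : IsBoundedStationary μ X) (k : ℕ) :
    0 ≤ thetabar μ X k :=
  (integral_nonneg fun _ => abs_nonneg _).trans (hX.le_thetabar le_rfl)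

lemma thetabar_antitone [IsProbabilityMeasure μ] (hX : IsBoundedStationary μ X) :
    Antitone (thetabar μ X) := fun _ _ hkl =>
  ciSup_le fun j => hX.le_thetabar ((Nat.cast_le.mpr hkl).trans j.2)

def forwardFiltration (hX : IsBoundedStationary μ X) : Filtration ℕ m0 :=
  Filtration.natural (fun k : ℕ => X ((k : ℤ) + 1)) fun _ => (hX.measurable _).stronglyMeasurable

lemma stronglyMeasurable_pSum (hX : IsBoundedStationary μ X) (k : ℕ) :
    StronglyMeasurable[hX.forwardFiltration k] (pSum X k) :=
  (measurable_sum _ fun i hi => ((Filtration.stronglyAdapted_natural _ i).mono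
    (hX.forwardFiltration.mono (mem_range.mp hi).le)).measurable).stronglyMeasurable

lemma forwardFiltration_le_comap (hX : IsBoundedStationary μ X) (k : ℕ) :
    hX.forwardFiltration k
      ≤ MeasurableSpace.comap (fun ω (j : Fin (k + 1)) => X ((j : ℤ) + 1) ω) inferInstance := by
  rw [MeasurableSpace.comap_process_pi]
  exact iSup₂_le fun j hj => le_iSup_of_le (⟨j, by omega⟩ : Fin (k + 1)) le_rfl

lemma comap_le_natFiltration (X : ℤ → Ω → ℝ) (k : ℕ) :
    MeasurableSpace.comap (fun ω (j : Fin (k + 1)) => X ((j : ℤ) + 1 - (k + 1)) ω) inferInstance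
      ≤ natFiltration X 0 := by
  rw [MeasurableSpace.comap_process_pi]
  refine iSup_le fun j => le_iSup₂_of_le _ ?_ le_rfl
  have := j.isLt
  simp only [Set.mem_Iic]
  omega

lemma integral_abs_condExp_forwardFiltration_le_thetabar [IsProbabilityMeasure μ]
    (hX : IsBoundedStationary μ X) (k L : ℕ) :
    ∫ ω, |μ[X (((k + L : ℕ) : ℤ) + 1) | hX.forwardFiltration k] ω| ∂μ ≤ thetabar μ X L := by
  -- The times `1, …, k + 1, k + L + 1`; shifted by `k + 1`, the first `k + 1` lie in `Iic 0`.
  set t : Fin (k + 2) → ℤ := Fin.snoc (fun j : Fin (k + 1) => (j : ℤ) + 1) (((k + L : ℕ) : ℤ) + 1)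
  set W : ℤ → Ω → Fin (k + 2) → ℝ := fun s ω j => X (t j - s) ω
  have hW : ∀ s, Measurable (W s) := fun s => measurable_pi_lambda _ fun _ => hX.measurable _
  have hlaw : μ.map (W 0) = μ.map (W (k + 1)) := by
    simpa [W] using hX.stationary (k + 2) (fun j => t j - (k + 1)) (k + 1)
  have hinit : Measurable (Fin.init : (Fin (k + 2) → ℝ) → Fin (k + 1) → ℝ) :=
    measurable_pi_lambda _ fun _ => measurable_pi_apply _
  have hinitW : ∀ s, Fin.init ∘ W s = fun ω (j : Fin (k + 1)) => X ((j : ℤ) + 1 - s) ω := by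
    intro s; funext ω j; simp [W, t, Fin.init]
  have hlast : (fun v : Fin (k + 2) → ℝ => v (Fin.last _)) ∘ W 0 = X (((k + L : ℕ) : ℤ) + 1) := by
    funext ω; simp [W, t]
  have hlast' : (fun v : Fin (k + 2) → ℝ => v (Fin.last _)) ∘ W (k + 1) = X L := by
    funext ω; simp only [Function.comp_apply, W, t, Fin.snoc_last]; congr 1; push_cast; ring
  have hint : Integrable (fun v : Fin (k + 2) → ℝ => v (Fin.last _)) (μ.map (W 0)) := by
    refine (integrable_map_measure (measurable_pi_apply _).aestronglyMeasurable
      (hW 0).aemeasurable).mpr ?_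
    rw [hlast]
    exact hX.integrable _
  calc _ ≤ ∫ ω, |μ[X (((k + L : ℕ) : ℤ) + 1) | MeasurableSpace.comap (Fin.init ∘ W 0)
          inferInstance] ω| ∂μ := by
        refine integral_abs_condExp_le_of_le ?_ (hinit.comp (hW 0)).comap_le _
        rw [hinitW]
        simpa only [sub_zero] using hX.forwardFiltration_le_comap k
    _ = ∫ ω, |μ[X L | MeasurableSpace.comap (Fin.init ∘ W (k + 1)) inferInstance] ω| ∂μ := by
        rw [← hlast, ← hlast']
        exact integral_abs_condExp_comp_eq_of_map_eq (hW 0) (hW _) hlaw hinit hint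
    _ ≤ ∫ ω, |μ[X L | natFiltration X 0] ω| ∂μ := by
        refine integral_abs_condExp_le_of_le ?_ (iSup₂_le fun i _ => (hX.measurable i).comap_le) _
        rw [hinitW]
        exact comap_le_natFiltration X k
    _ ≤ thetabar μ X L := hX.le_thetabar le_rfl

theorem measureReal_pSumMax_ge_le [IsProbabilityMeasure μ] (hX : IsBoundedStationary μ X)
    (n L : ℕ) {x b : ℝ} (hx : 0 < x) (hL : 2 * (L : ℝ) ≤ x) (hbx : b < x) :
    μ.real {ω | 4 * x ≤ pSumMax X n ω}
      ≤ (∫ ω, max (pSum X n ω - b) 0 ∂μ) / (x - b) + 2 * (n * thetabar μ X L) / x := by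
  set ℱ := hX.forwardFiltration
  set f : ℕ → Ω → ℝ := fun k => μ[pSum X (k + L) | ℱ k]
  have hfS : ∀ k ≤ n, ∀ᵐ ω ∂μ, |f k ω - pSum X k ω| ≤ L := fun k _ =>
    ae_abs_condExp_sub_le (ℱ.le k) (hX.integrable_pSum _) (hX.stronglyMeasurable_pSum k)
      (hX.integrable_pSum k) (hX.ae_abs_pSum_add_sub_le k L)
  have hD : ∫ ω, predictableVariation f ℱ μ n ω ∂μ ≤ n * thetabar μ X L := by
    rw [integral_predictableVariation]
    refine (sum_le_sum fun i _ => ?_).trans_eq (by rw [sum_const, card_range, nsmul_eq_mul])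
    have hinc : pSum X (i + 1 + L) - pSum X (i + L) = X (((i + L : ℕ) : ℤ) + 1) := by
      rw [Nat.add_right_comm, pSum_succ_sub]
    have h := condExp_sub_condExp_succ_ae_eq (ℱ := ℱ) (fun k => hX.integrable_pSum (k + L)) i
    rw [hinc] at h
    exact (integral_congr_ae (h.fun_comp abs)).trans_le
      (hX.integral_abs_condExp_forwardFiltration_le_thetabar i L)
  have hthr : {ω | 4 * x ≤ pSumMax X n ω} = {ω | b + 2 * L + (3 * x - 2 * L - b) + x ≤
      (range (n + 1)).sup' nonempty_range_add_one fun k => pSum X k ω} := by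
    ext ω
    simp only [Set.mem_ofPred_eq, pSumMax_eq_sup']
    ring_nf
  rw [hthr]
  refine (measureReal_le_sup'_of_abs_sub_le (fun k => stronglyMeasurable_condExp)
    (fun k => integrable_condExp) hfS (hX.integrable_pSum n) (by linarith) hx hD).trans ?_
  have hE : (∫ ω, max (pSum X n ω - b) 0 ∂μ) / (3 * x - 2 * L - b)
      ≤ (∫ ω, max (pSum X n ω - b) 0 ∂μ) / (x - b) :=
    div_le_div_of_nonneg_left (integral_nonneg fun _ => le_max_right _ _) (by linarith)
      (by linarith)
  have hθ : n * thetabar μ X L / (3 * x - 2 * L - b) ≤ n * thetabar μ X L / x :=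
    div_le_div_of_nonneg_left (mul_nonneg n.cast_nonneg (hX.thetabar_nonneg L)) hx (by linarith)
  calc _ = _ + _ + _ := by rw [add_div]
    _ ≤ _ := add_le_add (add_le_add hE hθ) le_rfl
    _ = _ := by ring

lemma two_mul_thetabar_div_le [IsProbabilityMeasure μ] (hX : IsBoundedStationary μ X) (n : ℕ)
    {x : ℝ} {L : ℕ} (hx : 0 < x) (hxL : x ≤ 4 * L) (hLx : (L : ℝ) ≤ x) :
    2 * (n * thetabar μ X L) / x
      ≤ 384 * (n / x ^ 4) * (1 + ∑ k ∈ Finset.Icc 1 L, k * min (k : ℝ) x * thetabar μ X k) := by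
  set Θ := ∑ k ∈ Finset.Icc 1 L, k * min (k : ℝ) x * thetabar μ X k
  have hterm : ∀ k ∈ Finset.Icc 1 L,
      (k : ℝ) ^ 2 * thetabar μ X L ≤ k * min (k : ℝ) x * thetabar μ X k := by
    intro k hk
    have hkL : k ≤ L := (Finset.mem_Icc.mp hk).2
    rw [min_eq_left ((Nat.cast_le.mpr hkL).trans hLx), ← sq]
    exact mul_le_mul_of_nonneg_left (hX.thetabar_antitone hkL) (sq_nonneg _)
  have hθ := hX.thetabar_nonneg L
  -- `x ≤ 4 L` and `L³ ≤ 3 ∑_{k ≤ L} k²` give the factor `4³ · 3 = 192`.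
  have hcube : thetabar μ X L * x ^ 3 ≤ 192 * Θ :=
    calc thetabar μ X L * x ^ 3 ≤ thetabar μ X L * (4 * L) ^ 3 := by gcongr
      _ ≤ thetabar μ X L * (192 * ∑ k ∈ Finset.Icc 1 L, (k : ℝ) ^ 2) := by
          gcongr
          linarith [pow_three_le_three_mul_sum_sq L]
      _ = 192 * ∑ k ∈ Finset.Icc 1 L, (k : ℝ) ^ 2 * thetabar μ X L := by rw [← sum_mul]; ring
      _ ≤ 192 * Θ := mul_le_mul_of_nonneg_left (sum_le_sum hterm) (by norm_num)
  calc 2 * (n * thetabar μ X L) / x = 2 * n * (thetabar μ X L * x ^ 3) / x ^ 4 := by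
        field_simp
    _ ≤ 2 * n * (192 * Θ) / x ^ 4 := by gcongr 2 * n * ?_ / _
    _ = 384 * (n / x ^ 4) * Θ := by ring
    _ ≤ _ := by gcongr; linarith

theorem measureReal_pSumMax_ge_le_of_convexOn [IsProbabilityMeasure μ]
    (hX : IsBoundedStationary μ X) {φ : ℝ → ℝ} (hmono : Monotone φ) (hφ0 : ∀ t, 0 ≤ φ t)
    (hconv : ConvexOn ℝ Set.univ φ) {x : ℝ} (hx : 0 < x) (hφx : 0 < φ x) {n : ℕ} (hn : 0 < n) :
    μ.real {ω | 4 * x ≤ pSumMax X n ω}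
      ≤ (∫ ω, φ (pSum X n ω) ∂μ) / φ x + 384 * (n / x ^ 4) *
        (1 + ∑ k ∈ Finset.Icc 1 ⌊x / 2⌋₊, k * min (k : ℝ) x * thetabar μ X k) := by
  set L := ⌊x / 2⌋₊
  set Θ := ∑ k ∈ Finset.Icc 1 L, k * min (k : ℝ) x * thetabar μ X k
  have hΘ : 0 ≤ Θ := sum_nonneg fun k _ => mul_nonneg
    (mul_nonneg k.cast_nonneg (le_min k.cast_nonneg hx.le)) (hX.thetabar_nonneg k)
  have hφint := hX.integrable_comp_pSum hmono n
  have hE : 0 ≤ (∫ ω, φ (pSum X n ω) ∂μ) / φ x :=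
    div_nonneg (integral_nonneg fun _ => hφ0 _) hφx.le
  have hx4 : 0 < x ^ 4 := by positivity
  by_cases hsmall : x ^ 4 ≤ 384 * n
  · calc μ.real {ω | 4 * x ≤ pSumMax X n ω} ≤ 1 := measureReal_le_one
      _ ≤ 384 * (n / x ^ 4) := by rw [mul_div_assoc', le_div_iff₀ hx4]; linarith
      _ ≤ 384 * (n / x ^ 4) * (1 + Θ) := le_mul_of_one_le_right (by positivity) (by linarith)
      _ ≤ _ := le_add_of_nonneg_left hE
  have h4x : 4 ≤ x := by
    by_contra! h
    have : (1 : ℝ) ≤ n := by exact_mod_cast hn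
    nlinarith [pow_lt_pow_left₀ h hx.le (by norm_num : 4 ≠ 0)]
  obtain ⟨a, ha, htangent⟩ : ∃ a, 0 ≤ a ∧ ∀ y, φ x + a * (y - x) ≤ φ y :=
    ⟨_, (hmono.monotoneOn _).derivWithin_nonneg, hconv.add_derivWithin_Ioi_mul_sub_le x⟩
  rcases ha.eq_or_lt with rfl | ha
  · have hφE : φ x ≤ ∫ ω, φ (pSum X n ω) ∂μ :=
      calc φ x = ∫ _, φ x ∂μ := by simp
        _ ≤ _ := integral_mono (integrable_const _) hφint fun ω => by
          simpa using htangent (pSum X n ω)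
    calc μ.real {ω | 4 * x ≤ pSumMax X n ω} ≤ 1 := measureReal_le_one
      _ ≤ (∫ ω, φ (pSum X n ω) ∂μ) / φ x := (one_le_div hφx).mpr hφE
      _ ≤ _ := le_add_of_nonneg_right (by positivity)
  have hL2 : 2 * (L : ℝ) ≤ x := by linarith [Nat.floor_le (by positivity : 0 ≤ x / 2)]
  have hL4 : x ≤ 4 * L := by linarith [Nat.lt_floor_add_one (x / 2)]
  linarith [hX.measureReal_pSumMax_ge_le n L hx hL2 (sub_lt_self x (div_pos hφx ha)),
    integral_max_sub_div_le_of_tangent (hX.integrable_pSum n) hφint hφ0 ha hφx htangent,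
    hX.two_mul_thetabar_div_le n hx hL4 (by linarith)]

end IsBoundedStationary

end Stationary

/-- Inequality (5.1): there is a universal constant `c` such that for every nondecreasing
nonnegative convex `φ`, every `x > 0` with `φ(x) > 0` and every `n ≥ 1`,
`P(S_n^* ≥ 4x) ≤ E(φ(S_n))/φ(x) + c (n/x⁴)(1 + ∑_{k≥1} k (k∧x) θ̄(k))`. -/
theorem deviation_convex_function :
    ∃ c : ℝ, 0 < c ∧
      ∀ (Ω : Type) (_ : MeasurableSpace Ω) (μ : Measure Ω) (X : ℤ → Ω → ℝ),
        IsProbabilityMeasure μ →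
        (∀ i, Measurable (X i)) →
        IsStrictlyStationary μ X →
        (∀ᵐ ω ∂μ, |X 0 ω| ≤ 1) →
        (∫ ω, X 0 ω ∂μ) = 0 →
        ∀ φ : ℝ → ℝ, Monotone φ → (∀ t, 0 ≤ φ t) → ConvexOn ℝ Set.univ φ →
          ∀ x : ℝ, 0 < x → 0 < φ x → ∀ n : ℕ, 0 < n →
            μ {ω | 4 * x ≤ pSumMax X n ω} ≤
              ENNReal.ofReal ((∫ ω, φ (pSum X n ω) ∂μ) / φ x)
              + ENNReal.ofReal c * ENNReal.ofReal ((n : ℝ) / x ^ 4) *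
                  (1 + ∑' k : ℕ,
                    ENNReal.ofReal ((k : ℝ) * min (k : ℝ) x * thetabar μ X k)) := by
  refine ⟨384, by norm_num, ?_⟩
  intro Ω _ μ X _ hmeas hstat hbound _ φ hmono hφ0 hconv x hx hφx n hn
  have hX : IsBoundedStationary μ X := ⟨hmeas, hstat, hbound⟩
  have hterm : ∀ k : ℕ, 0 ≤ (k : ℝ) * min (k : ℝ) x * thetabar μ X k := fun k =>
    mul_nonneg (mul_nonneg k.cast_nonneg (le_min k.cast_nonneg hx.le)) (hX.thetabar_nonneg k)
  rw [← ofReal_measureReal, ← ENNReal.ofReal_mul (by norm_num)]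
  calc _ ≤ ENNReal.ofReal ((∫ ω, φ (pSum X n ω) ∂μ) / φ x + 384 * (n / x ^ 4) *
          (1 + ∑ k ∈ Finset.Icc 1 ⌊x / 2⌋₊, k * min (k : ℝ) x * thetabar μ X k)) :=
        ENNReal.ofReal_le_ofReal
          (hX.measureReal_pSumMax_ge_le_of_convexOn hmono hφ0 hconv hx hφx hn)
    _ ≤ _ := by
        refine ENNReal.ofReal_add_le.trans ?_
        rw [ENNReal.ofReal_mul (by positivity)]
        gcongr
        exact ENNReal.ofReal_one_add_sum_le_tsum hterm _
end
end

section
/- Let (X'_i)_{i∈ℤ} be an independent copy of the process (X_i)_{i∈ℤ}, set Z_i = X_i − X'_i, let F̃_0 = σ(X_i, X'_i : i ≤ 0), and let θ_{Z,p,q}(k) be defined as θ_{X,p,q}(k) but with the sequence (Z_i) in place of (X_i) and F̃_0 in place of F_0. Then for any integer k ≥ 0 and any positive integers p and q, θ_{Z,p,q}(k) ≤ 2^{q+1} θ_{X,p,q}(k). -/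
open MeasureTheory ProbabilityTheory Filter Set Asymptotics
open scoped ENNReal NNReal Topology MeasureTheory

noncomputable section

/-!
Expand `∏ (X_{k_i} - X'_{k_i}) ^ a_i` binomially as
`∑_c β_c ∏ X_{k_i} ^ c_i ∏ X'_{k_i} ^ (a_i - c_i)`, where `∑ |β_c| = 2 ^ (∑ a_i) ≤ 2 ^ q`.
In each term the two factors are measurable with respect to the independent σ-algebras `σ(X)`
and `σ(X')`, so the conditional expectation given `F₀ ∨ F₀'` is the product of the conditional
expectations given `F₀` and `F₀'`; since all factors are bounded by `1`, the `L¹` deviation of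
the product from its mean is at most the sum of the two deviations. Each of these is at most
`θ_{X,p,q}(k)`: for the `X'` factor because `X'` has the law of `X`, and in both cases after
dropping the leading indices with exponent `0`.
-/

-- `thetaCoef μ m Y p q k` is definitionally the supremum of `condExpDeviation μ m` over the
-- admissible monomials `ω ↦ ∏ i, Y (k_i) ω ^ a_i`.
def condExpDeviation {Ω : Type*} [MeasurableSpace Ω] (μ : Measure Ω) (m : MeasurableSpace Ω)
    (f : Ω → ℝ) : ℝ :=
  ∫ ω, |μ[f | m] ω - ∫ ω', f ω' ∂μ| ∂μ

section CondExpDeviation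

variable {Ω : Type*} {m : MeasurableSpace Ω} [mΩ : MeasurableSpace Ω] {μ : Measure Ω}

theorem condExpDeviation_nonneg (f : Ω → ℝ) : 0 ≤ condExpDeviation μ m f :=
  integral_nonneg fun _ => abs_nonneg _

theorem condExpDeviation_const (hm : m ≤ mΩ) [IsProbabilityMeasure μ] (c : ℝ) :
    condExpDeviation μ m (fun _ => c) = 0 := by
  simp [condExpDeviation, condExp_const hm]

theorem integral_abs_le_one_of_ae_abs_le_one [IsProbabilityMeasure μ] {f : Ω → ℝ}
    (hf : ∀ᵐ ω ∂μ, |f ω| ≤ 1) : ∫ ω, |f ω| ∂μ ≤ 1 := by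
  simpa using integral_mono_of_nonneg (ae_of_all _ fun ω => abs_nonneg (f ω))
    (integrable_const 1) hf

theorem condExpDeviation_le_two_mul_integral_abs [IsProbabilityMeasure μ] (f : Ω → ℝ) :
    condExpDeviation μ m f ≤ 2 * ∫ ω, |f ω| ∂μ := by
  calc condExpDeviation μ m f ≤ ∫ ω, (|μ[f | m] ω| + |∫ ω', f ω' ∂μ|) ∂μ :=
        integral_mono (integrable_condExp.sub (integrable_const _)).abs
          (integrable_condExp.abs.add (integrable_const _)) fun ω => abs_sub _ _
    _ = (∫ ω, |μ[f | m] ω| ∂μ) + |∫ ω', f ω' ∂μ| := by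
        rw [integral_add integrable_condExp.abs (integrable_const _), integral_const,
          probReal_univ, one_smul]
    _ ≤ 2 * ∫ ω, |f ω| ∂μ := by
        linarith [integral_abs_condExp_le (m := m) (μ := μ) f,
          abs_integral_le_integral_abs (μ := μ) (f := f)]

theorem condExpDeviation_sum_le [IsFiniteMeasure μ] {ι : Type*} (s : Finset ι) (a : ι → ℝ)
    {f : ι → Ω → ℝ} (hf : ∀ c ∈ s, Integrable (f c) μ) :
    condExpDeviation μ m (fun ω => ∑ c ∈ s, a c * f c ω) ≤
      ∑ c ∈ s, |a c| * condExpDeviation μ m (f c) := by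
  have hsum : (fun ω => ∑ c ∈ s, a c * f c ω) = ∑ c ∈ s, a c • f c := by
    ext ω; simp [Finset.sum_apply]
  have hcond : μ[∑ c ∈ s, a c • f c | m] =ᵐ[μ] fun ω => ∑ c ∈ s, a c * μ[f c | m] ω := by
    have hsmul : ∀ᵐ ω ∂μ, ∀ c ∈ s, μ[a c • f c | m] ω = a c * μ[f c | m] ω :=
      (Filter.eventually_all_finset s).2 fun c _ => by
        filter_upwards [condExp_smul (a c) (f c) m] with ω hω using hω
    filter_upwards [condExp_finsetSum (fun c hc => (hf c hc).smul (a c)) m, hsmul]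
      with ω hω hω'
    rw [hω, Finset.sum_apply]
    exact Finset.sum_congr rfl hω'
  have hint : ∫ ω, (∑ c ∈ s, a c • f c) ω ∂μ = ∑ c ∈ s, a c * ∫ ω, f c ω ∂μ := by
    simp only [Finset.sum_apply, Pi.smul_apply, smul_eq_mul]
    rw [integral_finsetSum s fun c hc => (hf c hc).const_mul (a c)]
    simp only [integral_const_mul]
  have hdev : ∀ c ∈ s, Integrable (fun ω => |a c| * |μ[f c | m] ω - ∫ ω', f c ω' ∂μ|) μ :=
    fun c _ => ((integrable_condExp.sub (integrable_const _)).abs).const_mul _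
  rw [condExpDeviation, hsum, hint]
  calc ∫ ω, |μ[∑ c ∈ s, a c • f c | m] ω - ∑ c ∈ s, a c * ∫ ω', f c ω' ∂μ| ∂μ
      ≤ ∫ ω, ∑ c ∈ s, |a c| * |μ[f c | m] ω - ∫ ω', f c ω' ∂μ| ∂μ := by
        refine integral_mono_ae (integrable_condExp.sub (integrable_const _)).abs
          (integrable_finsetSum s hdev) ?_
        filter_upwards [hcond] with ω hω
        rw [hω, ← Finset.sum_sub_distrib]
        refine (Finset.abs_sum_le_sum_abs _ _).trans_eq (Finset.sum_congr rfl fun c _ => ?_)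
        rw [← mul_sub, abs_mul]
    _ = ∑ c ∈ s, |a c| * condExpDeviation μ m (f c) := by
        rw [integral_finsetSum s hdev]
        simp only [integral_const_mul, condExpDeviation]

end CondExpDeviation

theorem abs_mul_sub_mul_le {a b c d : ℝ} (hb : |b| ≤ 1) (hc : |c| ≤ 1) :
    |a * b - c * d| ≤ |a - c| + |b - d| := by
  calc |a * b - c * d| = |(a - c) * b + c * (b - d)| := by ring_nf
    _ ≤ |a - c| * |b| + |c| * |b - d| := by
        rw [← abs_mul, ← abs_mul]; exact abs_add_le _ _
    _ ≤ |a - c| + |b - d| := by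
        gcongr
        · exact mul_le_of_le_one_right (abs_nonneg _) hb
        · exact mul_le_of_le_one_left (abs_nonneg _) hc

theorem sup_eq_generateFrom_inter {Ω : Type*} (m₁ m₂ : MeasurableSpace Ω) :
    m₁ ⊔ m₂ = MeasurableSpace.generateFrom
      (Set.image2 (· ∩ ·) {s | MeasurableSet[m₁] s} {t | MeasurableSet[m₂] t}) := by
  refine le_antisymm (sup_le ?_ ?_) (MeasurableSpace.generateFrom_le ?_)
  · exact fun s hs => MeasurableSpace.measurableSet_generateFrom
      ⟨s, hs, univ, MeasurableSet.univ, inter_univ s⟩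
  · exact fun t ht => MeasurableSpace.measurableSet_generateFrom
      ⟨univ, MeasurableSet.univ, t, ht, univ_inter t⟩
  · rintro _ ⟨s, hs, t, ht, rfl⟩
    exact (le_sup_left (b := m₂) _ hs).inter (le_sup_right (a := m₁) _ ht)

theorem isPiSystem_image2_inter {Ω : Type*} (m₁ m₂ : MeasurableSpace Ω) :
    IsPiSystem (Set.image2 (· ∩ ·) {s | MeasurableSet[m₁] s} {t | MeasurableSet[m₂] t}) := by
  rintro _ ⟨s, hs, t, ht, rfl⟩ _ ⟨s', hs', t', ht', rfl⟩ -
  exact ⟨s ∩ s', hs.inter hs', t ∩ t', ht.inter ht', inter_inter_inter_comm s s' t t'⟩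

section Independence

variable {Ω : Type*} {m₁ m₂ M₁ M₂ : MeasurableSpace Ω} [mΩ : MeasurableSpace Ω]
  {μ : Measure Ω}

theorem setIntegral_eq_of_isPiSystem {E : Type*} [NormedAddCommGroup E] [NormedSpace ℝ E]
    {m : MeasurableSpace Ω} (hm : m ≤ mΩ) {S : Set (Set Ω)} (hgen : m = .generateFrom S)
    (hS : IsPiSystem S) (hS_univ : univ ∈ S) {f g : Ω → E} (hf : Integrable f μ)
    (hg : Integrable g μ) (hfg : ∀ t ∈ S, ∫ ω in t, f ω ∂μ = ∫ ω in t, g ω ∂μ)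
    {s : Set Ω} (hs : MeasurableSet[m] s) : ∫ ω in s, f ω ∂μ = ∫ ω in s, g ω ∂μ := by
  have huniv : ∫ ω, f ω ∂μ = ∫ ω, g ω ∂μ := by simpa using hfg univ hS_univ
  induction s, hs using MeasurableSpace.induction_on_inter hgen hS with
  | empty => simp
  | basic t ht => exact hfg t ht
  | compl t ht iht =>
    have hf' := integral_add_compl (hm t ht) hf
    have hg' := integral_add_compl (hm t ht) hg
    rw [← sub_eq_of_eq_add' hf'.symm, ← sub_eq_of_eq_add' hg'.symm, iht, huniv]
  | iUnion t hdisj ht iht =>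
    rw [integral_iUnion (fun i => hm _ (ht i)) hdisj hf.integrableOn,
      integral_iUnion (fun i => hm _ (ht i)) hdisj hg.integrableOn]
    exact tsum_congr iht

theorem indepFun_of_indep (hind : Indep M₁ M₂ μ) {f g : Ω → ℝ} (hf : Measurable[M₁] f)
    (hg : Measurable[M₂] g) : IndepFun f g μ := by
  rw [IndepFun_iff_Indep]
  exact indep_of_indep_of_le_right (indep_of_indep_of_le_left hind hf.comap_le) hg.comap_le

theorem setIntegral_inter_mul_of_indep (hM₁ : M₁ ≤ mΩ) (hM₂ : M₂ ≤ mΩ) (hind : Indep M₁ M₂ μ)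
    {f g : Ω → ℝ} (hf : StronglyMeasurable[M₁] f) (hg : StronglyMeasurable[M₂] g)
    {s t : Set Ω} (hs : MeasurableSet[M₁] s) (ht : MeasurableSet[M₂] t) :
    ∫ ω in s ∩ t, f ω * g ω ∂μ = (∫ ω in s, f ω ∂μ) * ∫ ω in t, g ω ∂μ := by
  have hsplit : (s ∩ t).indicator (fun ω => f ω * g ω) = s.indicator f * t.indicator g := by
    ext ω; by_cases hωs : ω ∈ s <;> by_cases hωt : ω ∈ t <;> simp [hωs, hωt]
  have hsf : StronglyMeasurable[M₁] (s.indicator f) := hf.indicator hs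
  have htg : StronglyMeasurable[M₂] (t.indicator g) := hg.indicator ht
  rw [← integral_indicator ((hM₁ s hs).inter (hM₂ t ht)), hsplit,
    (indepFun_of_indep hind hsf.measurable htg.measurable).integral_mul_eq_mul_integral
      (hsf.mono hM₁).aestronglyMeasurable (htg.mono hM₂).aestronglyMeasurable,
    integral_indicator (hM₁ s hs), integral_indicator (hM₂ t ht)]

theorem condExp_mul_ae_eq_of_indep [IsFiniteMeasure μ] (h₁ : m₁ ≤ M₁) (h₂ : m₂ ≤ M₂)
    (hM₁ : M₁ ≤ mΩ) (hM₂ : M₂ ≤ mΩ) (hind : Indep M₁ M₂ μ) {f g : Ω → ℝ}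
    (hf : StronglyMeasurable[M₁] f) (hg : StronglyMeasurable[M₂] g)
    (hfi : Integrable f μ) (hgi : Integrable g μ) :
    μ[f * g | m₁ ⊔ m₂] =ᵐ[μ] μ[f | m₁] * μ[g | m₂] := by
  have hm₁ : m₁ ≤ mΩ := h₁.trans hM₁
  have hm₂ : m₂ ≤ mΩ := h₂.trans hM₂
  have hf₁ : StronglyMeasurable[m₁] μ[f | m₁] := stronglyMeasurable_condExp
  have hg₂ : StronglyMeasurable[m₂] μ[g | m₂] := stronglyMeasurable_condExp
  have hfg : Integrable (f * g) μ :=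
    (indepFun_of_indep hind hf.measurable hg.measurable).integrable_mul hfi hgi
  have hfg₁₂ : Integrable (μ[f | m₁] * μ[g | m₂]) μ :=
    (indepFun_of_indep hind (hf₁.mono h₁).measurable (hg₂.mono h₂).measurable).integrable_mul
      integrable_condExp integrable_condExp
  refine (ae_eq_condExp_of_forall_setIntegral_eq (sup_le hm₁ hm₂) hfg
    (fun _ _ _ => hfg₁₂.integrableOn) (fun s hs _ => ?_)
    ((hf₁.mono le_sup_left).mul (hg₂.mono le_sup_right)).aestronglyMeasurable).symm
  refine setIntegral_eq_of_isPiSystem (sup_le hm₁ hm₂) (sup_eq_generateFrom_inter m₁ m₂)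
    (isPiSystem_image2_inter m₁ m₂) ⟨univ, .univ, univ, .univ, inter_univ _⟩ hfg₁₂ hfg ?_ hs
  rintro _ ⟨s, hs, t, ht, rfl⟩
  simp only [Pi.mul_apply]
  rw [setIntegral_inter_mul_of_indep hM₁ hM₂ hind (hf₁.mono h₁) (hg₂.mono h₂) (h₁ s hs) (h₂ t ht),
    setIntegral_inter_mul_of_indep hM₁ hM₂ hind hf hg (h₁ s hs) (h₂ t ht),
    setIntegral_condExp hm₁ hfi hs, setIntegral_condExp hm₂ hgi ht]

theorem condExpDeviation_mul_le_of_indep [IsProbabilityMeasure μ] (h₁ : m₁ ≤ M₁) (h₂ : m₂ ≤ M₂)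
    (hM₁ : M₁ ≤ mΩ) (hM₂ : M₂ ≤ mΩ) (hind : Indep M₁ M₂ μ) {f g : Ω → ℝ}
    (hf : StronglyMeasurable[M₁] f) (hg : StronglyMeasurable[M₂] g)
    (hf_le : ∀ᵐ ω ∂μ, |f ω| ≤ 1) (hg_le : ∀ᵐ ω ∂μ, |g ω| ≤ 1) :
    condExpDeviation μ (m₁ ⊔ m₂) (f * g) ≤ condExpDeviation μ m₁ f + condExpDeviation μ m₂ g := by
  have hfi : Integrable f μ := .of_bound (hf.mono hM₁).aestronglyMeasurable 1 hf_le
  have hgi : Integrable g μ := .of_bound (hg.mono hM₂).aestronglyMeasurable 1 hg_le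
  have hmean : ∫ ω, (f * g) ω ∂μ = (∫ ω, f ω ∂μ) * ∫ ω, g ω ∂μ :=
    (indepFun_of_indep hind hf.measurable hg.measurable).integral_mul_eq_mul_integral
      hfi.aestronglyMeasurable hgi.aestronglyMeasurable
  have hf_mean : |∫ ω, f ω ∂μ| ≤ 1 :=
    abs_integral_le_integral_abs.trans (integral_abs_le_one_of_ae_abs_le_one hf_le)
  have hg_cond : ∀ᵐ ω ∂μ, |μ[g | m₂] ω| ≤ 1 := ae_bdd_abs_condExp_of_ae_bdd_abs hg_le
  refine (integral_mono_ae (integrable_condExp.sub (integrable_const _)).abs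
    ((integrable_condExp.sub (integrable_const _)).abs.add
      (integrable_condExp.sub (integrable_const _)).abs) ?_).trans_eq
    (integral_add (integrable_condExp.sub (integrable_const _)).abs
      (integrable_condExp.sub (integrable_const _)).abs)
  filter_upwards [condExp_mul_ae_eq_of_indep h₁ h₂ hM₁ hM₂ hind hf hg hfi hgi, hg_cond]
    with ω hω hgω
  rw [Pi.sub_apply, hω, Pi.mul_apply, hmean]
  exact abs_mul_sub_mul_le hgω hf_mean

end Independence

section Law

variable {Ω α : Type*} [mΩ : MeasurableSpace Ω] {G : MeasurableSpace α} [mα : MeasurableSpace α]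
  {μ : Measure Ω} [IsFiniteMeasure μ] {Φ : Ω → α}

theorem condExp_comp_ae_eq {E : Type*} [NormedAddCommGroup E] [NormedSpace ℝ E] [CompleteSpace E]
    (hΦ : Measurable Φ) (hG : G ≤ mα) {h : α → E} (hh : Integrable h (μ.map Φ)) :
    μ[h ∘ Φ | G.comap Φ] =ᵐ[μ] (μ.map Φ)[h | G] ∘ Φ := by
  have hcond : StronglyMeasurable[G] (μ.map Φ)[h | G] := stronglyMeasurable_condExp
  refine (ae_eq_condExp_of_forall_setIntegral_eq ((MeasurableSpace.comap_mono hG).trans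
    hΦ.comap_le) (hh.comp_measurable hΦ) (fun _ _ _ => ?_) ?_
    (hcond.comp_measurable (Measurable.of_comap_le le_rfl)).aestronglyMeasurable).symm
  · exact (integrable_condExp.comp_measurable hΦ).integrableOn
  · rintro _ ⟨t, ht, rfl⟩ _
    change ∫ ω in Φ ⁻¹' t, (μ.map Φ)[h | G] (Φ ω) ∂μ = ∫ ω in Φ ⁻¹' t, h (Φ ω) ∂μ
    rw [← setIntegral_map (hG t ht) (hcond.mono hG).aestronglyMeasurable hΦ.aemeasurable,
      setIntegral_condExp hG hh ht,
      setIntegral_map (hG t ht) hh.aestronglyMeasurable hΦ.aemeasurable]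

theorem condExpDeviation_comp (hΦ : Measurable Φ) (hG : G ≤ mα) {h : α → ℝ}
    (hh : Integrable h (μ.map Φ)) :
    condExpDeviation μ (G.comap Φ) (h ∘ Φ) = condExpDeviation (μ.map Φ) G h := by
  have hdev : AEStronglyMeasurable (fun v => |(μ.map Φ)[h | G] v - ∫ v', h v' ∂μ.map Φ|)
      (μ.map Φ) :=
    ((stronglyMeasurable_condExp.mono hG).measurable.sub_const _).abs.aestronglyMeasurable
  rw [condExpDeviation, condExpDeviation, integral_map hΦ.aemeasurable hdev,
    integral_map hΦ.aemeasurable hh.aestronglyMeasurable]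
  refine integral_congr_ae ?_
  filter_upwards [condExp_comp_ae_eq hΦ hG hh] with ω hω
  rw [hω]
  rfl

theorem condExpDeviation_comp_eq_of_identDistrib {Ψ : Ω → α} (hΦ : Measurable Φ)
    (hΨ : Measurable Ψ) (hlaw : IdentDistrib Φ Ψ μ μ) (hG : G ≤ mα) {h : α → ℝ}
    (hh : Integrable h (μ.map Φ)) :
    condExpDeviation μ (G.comap Φ) (h ∘ Φ) = condExpDeviation μ (G.comap Ψ) (h ∘ Ψ) := by
  rw [condExpDeviation_comp hΦ hG hh, condExpDeviation_comp hΨ hG (hlaw.map_eq ▸ hh),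
    hlaw.map_eq]

end Law

section PathSpace

variable {Ω : Type*} [mΩ : MeasurableSpace Ω] {μ : Measure Ω}

theorem natFiltration_eq_comap (X : ℤ → Ω → ℝ) (j : ℤ) :
    natFiltration X j =
      (natFiltration (fun i (v : ℤ → ℝ) => v i) j).comap (fun ω i => X i ω) := by
  simp_rw [natFiltration, MeasurableSpace.comap_iSup, MeasurableSpace.comap_comp]
  rfl

theorem natFiltration_le_iSup_comap (X : ℤ → Ω → ℝ) (j : ℤ) :
    natFiltration X j ≤ ⨆ i, MeasurableSpace.comap (X i) Real.measurableSpace :=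
  iSup₂_le_iSup _ _

theorem iSup_comap_le {X : ℤ → Ω → ℝ} (hX : ∀ i, Measurable (X i)) :
    ⨆ i, MeasurableSpace.comap (X i) Real.measurableSpace ≤ mΩ :=
  iSup_le fun i => (hX i).comap_le

theorem IsStrictlyStationary.identDistrib {X : ℤ → Ω → ℝ} (hstat : IsStrictlyStationary μ X)
    (hX : ∀ i, Measurable (X i)) (i : ℤ) : IdentDistrib (X i) (X 0) μ μ := by
  have hlaw : IdentDistrib (fun ω (_ : Fin 1) => X i ω) (fun ω _ => X 0 ω) μ μ :=
    ⟨(measurable_pi_lambda _ fun _ => hX i).aemeasurable,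
      (measurable_pi_lambda _ fun _ => hX 0).aemeasurable, by simpa using hstat 1 (fun _ => 0) i⟩
  exact hlaw.comp (measurable_pi_apply 0)

theorem condExpDeviation_natFiltration_eq_of_identDistrib [IsFiniteMeasure μ]
    {X X' : ℤ → Ω → ℝ} (hX : ∀ i, Measurable (X i)) (hX' : ∀ i, Measurable (X' i))
    (hlaw : IdentDistrib (fun ω i => X' i ω) (fun ω i => X i ω) μ μ) (j : ℤ)
    {h : (ℤ → ℝ) → ℝ} (hh : Integrable h (μ.map fun ω i => X i ω)) :
    condExpDeviation μ (natFiltration X' j) (fun ω => h fun i => X' i ω) =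
      condExpDeviation μ (natFiltration X j) (fun ω => h fun i => X i ω) := by
  rw [natFiltration_eq_comap X', natFiltration_eq_comap X]
  exact condExpDeviation_comp_eq_of_identDistrib (measurable_pi_lambda _ hX')
    (measurable_pi_lambda _ hX) hlaw (iSup₂_le fun i _ => (measurable_pi_apply i).comap_le)
    (hlaw.map_eq ▸ hh)

end PathSpace

theorem stronglyMeasurable_prod_pow_iSup_comap {Ω : Type*} {p : ℕ} (Y : ℤ → Ω → ℝ)
    (κ : Fin p → ℤ) (b : Fin p → ℕ) :
    StronglyMeasurable[⨆ i, MeasurableSpace.comap (Y i) Real.measurableSpace]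
      (fun ω => ∏ i, Y (κ i) ω ^ b i) :=
  (Finset.measurable_prod _ fun i _ =>
    (Measurable.of_comap_le (le_iSup (fun j => MeasurableSpace.comap (Y j) _) (κ i))).pow_const
      (b i)).stronglyMeasurable

@[to_additive]
theorem Finset.prod_range_add_eq_of_eq_one {M : Type*} [CommMonoid M] {f : ℕ → M} {n₀ p : ℕ}
    (hlo : ∀ n < n₀, f n = 1) (hhi : ∀ n, p ≤ n → f n = 1) :
    ∏ n ∈ Finset.range p, f (n₀ + n) = ∏ n ∈ Finset.range p, f n := by
  have hleft := Finset.prod_range_add f n₀ p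
  have hright := Finset.prod_range_add f p n₀
  rw [Finset.prod_eq_one fun n hn => hlo n (Finset.mem_range.1 hn), one_mul] at hleft
  rw [Finset.prod_eq_one fun n _ => hhi _ (Nat.le_add_right p n), mul_one] at hright
  rw [← hleft, ← hright, add_comm]

theorem exists_reindex_prod_pow {M : Type*} [CommMonoid M] {p : ℕ} {k : ℤ} {κ : Fin p → ℤ}
    {b : Fin p → ℕ} (hκ : StrictMono κ) (hk : ∀ i, k ≤ κ i) (hb : ∃ i, b i ≠ 0) :
    ∃ κ' : Fin p → ℤ, ∃ b' : Fin p → ℕ, StrictMono κ' ∧ (∀ i, k ≤ κ' i) ∧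
      (∀ i : Fin p, (i : ℕ) = 0 → 1 ≤ b' i) ∧ ∑ i, b' i = ∑ i, b i ∧
      ∀ g : ℤ → M, ∏ i, g (κ' i) ^ b' i = ∏ i, g (κ i) ^ b i := by
  classical
  obtain ⟨i₀, hi₀⟩ := hb
  have hp : 0 < p := i₀.pos
  -- Extend `κ` and `b` to `ℕ` by fresh indices beyond the last one, with exponent `0`, and
  -- shift by the first position `n₀` with a nonzero exponent.
  set last : Fin p := ⟨p - 1, by omega⟩
  set K : ℕ → ℤ := fun n => if h : n < p then κ ⟨n, h⟩ else κ last + n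
  set B : ℕ → ℕ := fun n => if h : n < p then b ⟨n, h⟩ else 0
  have hK : ∀ i : Fin p, K i = κ i := fun i => dif_pos i.isLt
  have hB : ∀ i : Fin p, B i = b i := fun i => dif_pos i.isLt
  have hK_mono : StrictMono K := strictMono_nat_of_lt_succ fun n => by
    simp only [K]
    split_ifs with h₁ h₂ h₂
    · exact hκ (Fin.mk_lt_mk.2 n.lt_succ_self)
    · have : κ ⟨n, h₁⟩ ≤ κ last := hκ.monotone (Fin.mk_le_mk.2 (by omega))
      push_cast; omega
    · omega
    · push_cast; omega
  have hK_ge : ∀ n, k ≤ K n := fun n => by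
    simp only [K]
    split_ifs
    · exact hk _
    · linarith [hk last, Int.natCast_nonneg n]
  have hex : ∃ n, B n ≠ 0 := ⟨i₀, by rwa [hB]⟩
  set n₀ := Nat.find hex
  have hB_lo : ∀ n < n₀, B n = 0 := fun n hn => not_not.1 (Nat.find_min hex hn)
  have hB_hi : ∀ n, p ≤ n → B n = 0 := fun n hn => dif_neg (by omega)
  refine ⟨fun i => K (n₀ + i), fun i => B (n₀ + i), hK_mono.comp fun i j hij => ?_,
    fun i => hK_ge _, fun i hi => ?_, ?_, fun g => ?_⟩
  · exact Nat.add_lt_add_left hij n₀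
  · show 1 ≤ B (n₀ + i)
    rw [hi, add_zero]
    exact Nat.one_le_iff_ne_zero.2 (Nat.find_spec hex)
  · rw [Fin.sum_univ_eq_sum_range (fun n => B (n₀ + n)),
      Finset.sum_range_add_eq_of_eq_zero hB_lo hB_hi, ← Fin.sum_univ_eq_sum_range]
    simp only [hB]
  · have hone : ∀ n, B n = 0 → g (K n) ^ B n = 1 := fun n hn => by rw [hn, pow_zero]
    rw [Fin.prod_univ_eq_prod_range (fun n => g (K (n₀ + n)) ^ B (n₀ + n)),
      Finset.prod_range_add_eq_of_eq_one (f := fun n => g (K n) ^ B n)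
        (fun n hn => hone n (hB_lo n hn)) (fun n hn => hone n (hB_hi n hn)),
      ← Fin.prod_univ_eq_prod_range]
    simp only [hK, hB]

section Theta

variable {Ω : Type*} {m : MeasurableSpace Ω} [mΩ : MeasurableSpace Ω] {μ : Measure Ω}
  {Y : ℤ → Ω → ℝ} {p q k : ℕ}

theorem thetaCoef_nonneg : 0 ≤ thetaCoef μ m Y p q k :=
  Real.iSup_nonneg fun _ => condExpDeviation_nonneg _

theorem ae_abs_prod_pow_le_one (hY : ∀ i, ∀ᵐ ω ∂μ, |Y i ω| ≤ 1) (κ : Fin p → ℤ)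
    (b : Fin p → ℕ) : ∀ᵐ ω ∂μ, |∏ i, Y (κ i) ω ^ b i| ≤ 1 := by
  filter_upwards [ae_all_iff.2 fun i : Fin p => hY (κ i)] with ω hω
  rw [Finset.abs_prod]
  exact Finset.prod_le_one (fun _ _ => abs_nonneg _) fun i _ => by
    rw [abs_pow]; exact pow_le_one₀ (abs_nonneg _) (hω i)

theorem condExpDeviation_prod_pow_le_thetaCoef [IsProbabilityMeasure μ] (hm : m ≤ mΩ)
    (hY : ∀ i, ∀ᵐ ω ∂μ, |Y i ω| ≤ 1) {κ : Fin p → ℤ} {b : Fin p → ℕ} (hκ : StrictMono κ)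
    (hk : ∀ i, (k : ℤ) ≤ κ i) (hb : ∑ i, b i ≤ q) :
    condExpDeviation μ m (fun ω => ∏ i, Y (κ i) ω ^ b i) ≤ thetaCoef μ m Y p q k := by
  by_cases hzero : ∀ i, b i = 0
  · simp only [hzero, pow_zero, Finset.prod_const_one, condExpDeviation_const hm]
    exact thetaCoef_nonneg
  simp only [not_forall] at hzero
  obtain ⟨κ', b', hκ', hk', hb'₀, hsum, hprod⟩ := exists_reindex_prod_pow (M := ℝ) hκ hk hzero
  have hbdd : BddAbove (Set.range fun kb : (Fin p → ℤ) × (Fin p → ℕ) =>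
      condExpDeviation μ m (fun ω => ∏ i, Y (kb.1 i) ω ^ kb.2 i)) := by
    refine ⟨2, Set.forall_mem_range.2 fun kb => ?_⟩
    linarith [condExpDeviation_le_two_mul_integral_abs (m := m) (μ := μ)
      (fun ω => ∏ i, Y (kb.1 i) ω ^ kb.2 i),
      integral_abs_le_one_of_ae_abs_le_one (ae_abs_prod_pow_le_one hY kb.1 kb.2)]
  have hfun : (fun ω => ∏ i, Y (κ' i) ω ^ b' i) = fun ω => ∏ i, Y (κ i) ω ^ b i :=
    funext fun ω => hprod fun j => Y j ω
  rw [← hfun]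
  exact le_ciSup (hbdd.mono (Set.range_comp_subset_range Subtype.val _))
    ⟨(κ', b'), hκ', hk', hb'₀, hsum ▸ hb⟩

end Theta

def binomialCoeffSub {ι : Type*} [Fintype ι] (a c : ι → ℕ) : ℝ :=
  ∏ i, (-1) ^ (c i + a i) * ((a i).choose (c i) : ℝ)

theorem prod_sub_pow_eq_sum {ι : Type*} [Fintype ι] [DecidableEq ι] (x y : ι → ℝ)
    (a : ι → ℕ) :
    ∏ i, (x i - y i) ^ a i = ∑ c ∈ Fintype.piFinset fun i => Finset.range (a i + 1),
      binomialCoeffSub a c * ((∏ i, x i ^ c i) * ∏ i, y i ^ (a i - c i)) := by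
  simp_rw [sub_pow, Finset.prod_univ_sum, binomialCoeffSub, ← Finset.prod_mul_distrib]
  refine Finset.sum_congr rfl fun c _ => Finset.prod_congr rfl fun i _ => ?_
  ring

theorem sum_abs_binomialCoeffSub {ι : Type*} [Fintype ι] [DecidableEq ι] (a : ι → ℕ) :
    ∑ c ∈ Fintype.piFinset (fun i => Finset.range (a i + 1)), |binomialCoeffSub a c| =
      2 ^ ∑ i, a i := by
  simp only [binomialCoeffSub, Finset.abs_prod, abs_mul, abs_pow, abs_neg, abs_one, one_pow,
    one_mul, Nat.abs_cast]
  rw [← Finset.prod_univ_sum (fun i => Finset.range (a i + 1)) fun i j => ((a i).choose j : ℝ)]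
  simp only [← Nat.cast_sum, Nat.sum_range_choose]
  push_cast
  exact Finset.prod_pow_eq_pow_sum _ _ _

section Symmetrization

variable {Ω : Type*} [mΩ : MeasurableSpace Ω] {μ : Measure Ω} [IsProbabilityMeasure μ]
  {X X' : ℤ → Ω → ℝ} {p q k : ℕ}

theorem condExpDeviation_mul_prod_pow_le
    (hX : ∀ i, Measurable (X i)) (hX' : ∀ i, Measurable (X' i))
    (hindep : Indep (⨆ i, MeasurableSpace.comap (X' i) Real.measurableSpace)
      (⨆ i, MeasurableSpace.comap (X i) Real.measurableSpace) μ)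
    (hlaw : IdentDistrib (fun ω i => X' i ω) (fun ω i => X i ω) μ μ)
    (hbX : ∀ i, ∀ᵐ ω ∂μ, |X i ω| ≤ 1) (hbX' : ∀ i, ∀ᵐ ω ∂μ, |X' i ω| ≤ 1)
    {κ : Fin p → ℤ} (hκ : StrictMono κ) (hk : ∀ i, (k : ℤ) ≤ κ i) {c d : Fin p → ℕ}
    (hc : ∑ i, c i ≤ q) (hd : ∑ i, d i ≤ q) :
    condExpDeviation μ (natFiltration X 0 ⊔ natFiltration X' 0)
        (fun ω => (∏ i, X (κ i) ω ^ c i) * ∏ i, X' (κ i) ω ^ d i) ≤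
      2 * thetaCoef μ (natFiltration X 0) X p q k := by
  have hm : natFiltration X 0 ≤ mΩ := (natFiltration_le_iSup_comap X 0).trans (iSup_comap_le hX)
  have hd_int : Integrable (fun v : ℤ → ℝ => ∏ i, v (κ i) ^ d i) (μ.map fun ω i => X i ω) :=
    (integrable_map_measure (Finset.measurable_prod _ fun i _ =>
      (measurable_pi_apply (κ i)).pow_const (d i)).aestronglyMeasurable
      (measurable_pi_lambda _ hX).aemeasurable).2
      (.of_bound ((stronglyMeasurable_prod_pow_iSup_comap X κ d).mono
        (iSup_comap_le hX)).aestronglyMeasurable 1 (ae_abs_prod_pow_le_one hbX κ d))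
  calc _ ≤ condExpDeviation μ (natFiltration X 0) (fun ω => ∏ i, X (κ i) ω ^ c i) +
        condExpDeviation μ (natFiltration X' 0) (fun ω => ∏ i, X' (κ i) ω ^ d i) :=
        condExpDeviation_mul_le_of_indep (natFiltration_le_iSup_comap X 0)
          (natFiltration_le_iSup_comap X' 0) (iSup_comap_le hX) (iSup_comap_le hX') hindep.symm
          (stronglyMeasurable_prod_pow_iSup_comap X κ c)
          (stronglyMeasurable_prod_pow_iSup_comap X' κ d)
          (ae_abs_prod_pow_le_one hbX κ c) (ae_abs_prod_pow_le_one hbX' κ d)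
    _ = condExpDeviation μ (natFiltration X 0) (fun ω => ∏ i, X (κ i) ω ^ c i) +
        condExpDeviation μ (natFiltration X 0) (fun ω => ∏ i, X (κ i) ω ^ d i) := by
        rw [condExpDeviation_natFiltration_eq_of_identDistrib hX hX' hlaw 0 hd_int]
    _ ≤ 2 * thetaCoef μ (natFiltration X 0) X p q k := by
        linarith [condExpDeviation_prod_pow_le_thetaCoef hm hbX hκ hk hc,
          condExpDeviation_prod_pow_le_thetaCoef hm hbX hκ hk hd]

theorem condExpDeviation_prod_sub_pow_le
    (hX : ∀ i, Measurable (X i)) (hX' : ∀ i, Measurable (X' i))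
    (hindep : Indep (⨆ i, MeasurableSpace.comap (X' i) Real.measurableSpace)
      (⨆ i, MeasurableSpace.comap (X i) Real.measurableSpace) μ)
    (hlaw : IdentDistrib (fun ω i => X' i ω) (fun ω i => X i ω) μ μ)
    (hbX : ∀ i, ∀ᵐ ω ∂μ, |X i ω| ≤ 1) (hbX' : ∀ i, ∀ᵐ ω ∂μ, |X' i ω| ≤ 1)
    {κ : Fin p → ℤ} (hκ : StrictMono κ) (hk : ∀ i, (k : ℤ) ≤ κ i) {a : Fin p → ℕ}
    (ha : ∑ i, a i ≤ q) :
    condExpDeviation μ (natFiltration X 0 ⊔ natFiltration X' 0)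
        (fun ω => ∏ i, (X (κ i) ω - X' (κ i) ω) ^ a i) ≤
      2 ^ (q + 1) * thetaCoef μ (natFiltration X 0) X p q k := by
  set C := Fintype.piFinset fun i => Finset.range (a i + 1)
  have hC : ∀ c ∈ C, ∀ i, c i ≤ a i := fun c hc i =>
    Nat.lt_succ_iff.1 (Finset.mem_range.1 (Fintype.mem_piFinset.1 hc i))
  have hint : ∀ c ∈ C, Integrable
      (fun ω => (∏ i, X (κ i) ω ^ c i) * ∏ i, X' (κ i) ω ^ (a i - c i)) μ := fun c _ => by
    refine .of_bound ((((stronglyMeasurable_prod_pow_iSup_comap X κ c).mono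
      (iSup_comap_le hX)).mul ((stronglyMeasurable_prod_pow_iSup_comap X' κ _).mono
      (iSup_comap_le hX'))).aestronglyMeasurable) 1 ?_
    filter_upwards [ae_abs_prod_pow_le_one hbX κ c, ae_abs_prod_pow_le_one hbX' κ (a - c)]
      with ω hω hω'
    rw [Real.norm_eq_abs, abs_mul]
    exact mul_le_one₀ hω (abs_nonneg _) hω'
  simp_rw [prod_sub_pow_eq_sum]
  calc _ ≤ ∑ c ∈ C, |binomialCoeffSub a c| * condExpDeviation μ
          (natFiltration X 0 ⊔ natFiltration X' 0)
          (fun ω => (∏ i, X (κ i) ω ^ c i) * ∏ i, X' (κ i) ω ^ (a i - c i)) :=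
        condExpDeviation_sum_le C _ hint
    _ ≤ ∑ c ∈ C, |binomialCoeffSub a c| * (2 * thetaCoef μ (natFiltration X 0) X p q k) :=
        Finset.sum_le_sum fun c hc => mul_le_mul_of_nonneg_left
          (condExpDeviation_mul_prod_pow_le hX hX' hindep hlaw hbX hbX' hκ hk
            ((Finset.sum_le_sum fun i _ => hC c hc i).trans ha)
            ((Finset.sum_le_sum fun i _ => Nat.sub_le _ _).trans ha)) (abs_nonneg _)
    _ = 2 ^ (∑ i, a i) * (2 * thetaCoef μ (natFiltration X 0) X p q k) := by
        rw [← Finset.sum_mul, sum_abs_binomialCoeffSub]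
    _ ≤ 2 ^ q * (2 * thetaCoef μ (natFiltration X 0) X p q k) := by
        gcongr
        · exact mul_nonneg zero_le_two thetaCoef_nonneg
        · norm_num
    _ = 2 ^ (q + 1) * thetaCoef μ (natFiltration X 0) X p q k := by ring

end Symmetrization

theorem theta_symmetrized_le_general
    {Ω : Type*} [MeasurableSpace Ω] (μ : Measure Ω) (X X' : ℤ → Ω → ℝ)
    [IsProbabilityMeasure μ]
    (hmeas : ∀ i, Measurable (X i)) (hmeas' : ∀ i, Measurable (X' i))
    (hstat : IsStrictlyStationary μ X)
    (hbdd : ∀ᵐ ω ∂μ, |X 0 ω| ≤ 1)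
    (hindep : Indep (⨆ i : ℤ, MeasurableSpace.comap (X' i) Real.measurableSpace)
      (⨆ i : ℤ, MeasurableSpace.comap (X i) Real.measurableSpace) μ)
    (hcopy : μ.map (fun ω => fun i : ℤ => X' i ω) = μ.map (fun ω => fun i : ℤ => X i ω)) :
    ∀ (k p q : ℕ), 0 < p → 0 < q →
      thetaCoef μ (natFiltration X 0 ⊔ natFiltration X' 0)
          (fun i ω => X i ω - X' i ω) p q k ≤
        2 ^ (q + 1) * thetaCoef μ (natFiltration X 0) X p q k := by
  intro k p q _ _
  have hunit_ball : MeasurableSet {x : ℝ | |x| ≤ 1} :=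
    measurableSet_le measurable_id.abs measurable_const
  have hbX : ∀ i, ∀ᵐ ω ∂μ, |X i ω| ≤ 1 := fun i =>
    (hstat.identDistrib hmeas i).symm.ae_snd hunit_ball hbdd
  have hlaw : IdentDistrib (fun ω i => X' i ω) (fun ω i => X i ω) μ μ :=
    ⟨(measurable_pi_lambda _ hmeas').aemeasurable, (measurable_pi_lambda _ hmeas).aemeasurable,
      hcopy⟩
  have hbX' : ∀ i, ∀ᵐ ω ∂μ, |X' i ω| ≤ 1 := fun i =>
    (hlaw.comp (measurable_pi_apply i)).symm.ae_snd hunit_ball (hbX i)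
  refine Real.iSup_le (fun ⟨⟨κ, a⟩, hκ, hk, _, ha⟩ => ?_)
    (mul_nonneg (by positivity) thetaCoef_nonneg)
  exact condExpDeviation_prod_sub_pow_le hmeas hmeas' hindep hlaw hbX hbX' hκ hk ha

/-- Lemma 5.2: the dependence coefficients of the symmetrized sequence `Z_i = X_i - X'_i`
(with respect to `F̃_0 = σ(X_i, X'_i : i ≤ 0)`) satisfy
`θ_{Z,p,q}(k) ≤ 2^{q+1} θ_{X,p,q}(k)`. -/
theorem theta_symmetrized_le
    {Ω : Type*} [MeasurableSpace Ω] (μ : Measure Ω) (X X' : ℤ → Ω → ℝ)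
    [IsProbabilityMeasure μ]
    (hmeas : ∀ i, Measurable (X i)) (hmeas' : ∀ i, Measurable (X' i))
    (hstat : IsStrictlyStationary μ X)
    (hbdd : ∀ᵐ ω ∂μ, |X 0 ω| ≤ 1)
    (hcent : (∫ ω, X 0 ω ∂μ) = 0)
    (hindep : Indep (⨆ i : ℤ, MeasurableSpace.comap (X' i) Real.measurableSpace)
      (⨆ i : ℤ, MeasurableSpace.comap (X i) Real.measurableSpace) μ)
    (hcopy : μ.map (fun ω => fun i : ℤ => X' i ω) = μ.map (fun ω => fun i : ℤ => X i ω)) :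
    ∀ (k p q : ℕ), 0 < p → 0 < q →
      thetaCoef μ (natFiltration X 0 ⊔ natFiltration X' 0)
          (fun i ω => X i ω - X' i ω) p q k ≤
        2 ^ (q + 1) * thetaCoef μ (natFiltration X 0) X p q k :=
  theta_symmetrized_le_general μ X X' hmeas hmeas' hstat hbdd hindep hcopy
end
end
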